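/- arXiv:2309.03422 — 4 statements merged into one kernel-verified Lean document; each statement's English description precedes it below -/
import Mathlib

section
/- For any two distinct odd primes p and q, the height of Φ_{pq} equals 1. -/
open Polynomial

noncomputable def cycHeight (f : Polynomial ℤ) : ℕ :=
  f.support.sup fun m => (f.coeff m).natAbs

open Finset

/-! From `Φ_pq (X^p - 1)(X^q - 1) = (X^pq - 1)(X - 1)` one gets, as power series,
`Φ_pq = (1 - X)(1 - X^pq) · ∑ X^(pi) · ∑ X^(qj)`. Below degree `pq` the factor `1 - X^pq` is
invisible, and the coefficient of `X^n` in the double sum counts the ways to write `n = pi + qj`;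
by the Chinese remainder theorem there is at most one such way when `n < pq`. Hence each
coefficient of `Φ_pq` below `pq` is a difference of two numbers in `{0, 1}`, and `deg Φ_pq < pq`. -/

theorem cyclotomic_prime_mul_prime_mul_X_pow_sub_one (R : Type*) [CommRing R] {p q : ℕ}
    (hp : p.Prime) (hq : q.Prime) (hne : p ≠ q) :
    cyclotomic (p * q) R * ((X ^ p - 1) * (X ^ q - 1)) = (X ^ (p * q) - 1) * (X - 1) := by
  have := Fact.mk hq
  have hexpand := cyclotomic_expand_eq_cyclotomic_mul hp
    (fun h => hne ((Nat.prime_dvd_prime_iff_eq hp hq).mp h)) R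
  have hq_mul := cyclotomic_prime_mul_X_sub_one R q
  have hexpand_mul : expand R p (cyclotomic q R) * (X ^ p - 1) = X ^ (p * q) - 1 := by
    simpa [← pow_mul, mul_comm q p] using congrArg (expand R p) hq_mul
  rw [mul_comm q p] at hexpand
  linear_combination (X - 1) * hexpand_mul - (X ^ p - 1) * (X - 1) * hexpand
    - cyclotomic (p * q) R * (X ^ p - 1) * hq_mul

namespace PowerSeries

variable {R : Type*}

noncomputable def invOneSubXPow [Semiring R] (p : ℕ) : R⟦X⟧ :=
  mk fun n => if p ∣ n then 1 else 0

theorem one_sub_X_pow_mul_invOneSubXPow [Ring R] {p : ℕ} (hp : 0 < p) :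
    (1 - X ^ p) * invOneSubXPow p = (1 : R⟦X⟧) := by
  ext n
  rw [sub_mul, one_mul, map_sub, coeff_X_pow_mul', coeff_one]
  simp only [invOneSubXPow, coeff_mk]
  rcases le_or_gt p n with h | h
  · have hn : n ≠ 0 := by omega
    simp [h, hn, Nat.dvd_sub_iff_left h dvd_rfl]
  · rcases eq_or_ne n 0 with rfl | hn
    · simp [h.not_ge]
    · simp [h.not_ge, hn, Nat.not_dvd_of_pos_of_lt (Nat.pos_of_ne_zero hn) h]

theorem coeff_invOneSubXPow_mul_invOneSubXPow [Semiring R] (p q n : ℕ) :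
    coeff n (invOneSubXPow p * invOneSubXPow q : R⟦X⟧) =
      #{x ∈ antidiagonal n | p ∣ x.1 ∧ q ∣ x.2} := by
  simp only [coeff_mul, invOneSubXPow, coeff_mk, ite_mul, one_mul, zero_mul,
    Finset.natCast_card_filter, ite_and]

theorem coeff_one_sub_X_pow_mul_of_lt [Ring R] {N n : ℕ} (h : n < N) (f : R⟦X⟧) :
    coeff n ((1 - X ^ N) * f) = coeff n f := by
  simp [sub_mul, coeff_X_pow_mul', h.not_ge]

theorem natAbs_coeff_one_sub_X_mul_le_one {f : ℤ⟦X⟧} {n : ℕ}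
    (hf : ∀ m ≤ n, 0 ≤ coeff m f ∧ coeff m f ≤ 1) : (coeff n ((1 - X) * f)).natAbs ≤ 1 := by
  rw [sub_mul, one_mul, map_sub]
  rcases n with _ | n
  · have := hf 0 le_rfl
    simp only [coeff_zero_eq_constantCoeff, coeff_zero_X_mul] at this ⊢
    omega
  · rw [← pow_one X, coeff_X_pow_mul', if_pos (by omega)]
    have := hf (n + 1) le_rfl
    have := hf n (by omega)
    simp only [Nat.add_sub_cancel]
    omega

end PowerSeries

open PowerSeries in
theorem coe_cyclotomic_prime_mul_prime (R : Type*) [CommRing R] {p q : ℕ}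
    (hp : p.Prime) (hq : q.Prime) (hne : p ≠ q) :
    (cyclotomic (p * q) R : R⟦X⟧) =
      (1 - PowerSeries.X) *
        ((1 - PowerSeries.X ^ (p * q)) * (invOneSubXPow p * invOneSubXPow q)) := by
  have h : (cyclotomic (p * q) R : R⟦X⟧) * ((PowerSeries.X ^ p - 1) * (PowerSeries.X ^ q - 1)) =
      (PowerSeries.X ^ (p * q) - 1) * (PowerSeries.X - 1) := by
    simpa only [Polynomial.coe_mul, Polynomial.coe_sub, Polynomial.coe_pow, Polynomial.coe_X,
      Polynomial.coe_one] using congrArg (fun f : R[X] => (f : R⟦X⟧))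
      (cyclotomic_prime_mul_prime_mul_X_pow_sub_one R hp hq hne)
  have hSp := one_sub_X_pow_mul_invOneSubXPow (R := R) hp.pos
  have hSq := one_sub_X_pow_mul_invOneSubXPow (R := R) hq.pos
  linear_combination invOneSubXPow p * invOneSubXPow q * h
    - (cyclotomic (p * q) R : R⟦X⟧) * hSp
    - (cyclotomic (p * q) R : R⟦X⟧) * ((1 - PowerSeries.X ^ p) * invOneSubXPow p) * hSq

theorem card_antidiagonal_filter_dvd_le_one {p q n : ℕ} (hpq : p.Coprime q) (hn : n < p * q) :
    #{x ∈ antidiagonal n | p ∣ x.1 ∧ q ∣ x.2} ≤ 1 := by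
  refine Finset.card_le_one.mpr ?_
  rintro ⟨a, b⟩ hab ⟨a', b'⟩ hab'
  simp only [Finset.mem_filter, HasAntidiagonal.mem_antidiagonal] at hab hab'
  obtain ⟨rfl, hpa, hqb⟩ := hab
  obtain ⟨hsum, hpa', hqb'⟩ := hab'
  have hmodp : a ≡ a' [MOD p] :=
    (Nat.modEq_zero_iff_dvd.mpr hpa).trans (Nat.modEq_zero_iff_dvd.mpr hpa').symm
  have hmodq : a ≡ a' [MOD q] :=
    Nat.ModEq.add_right_cancel
      ((Nat.modEq_zero_iff_dvd.mpr hqb).trans (Nat.modEq_zero_iff_dvd.mpr hqb').symm)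
      (hsum ▸ Nat.ModEq.refl _)
  have ha : a = a' := ((Nat.modEq_and_modEq_iff_modEq_mul hpq).mp ⟨hmodp, hmodq⟩).eq_of_lt_of_lt
    (by omega) (by omega)
  ext <;> simp only <;> omega

theorem cycHeight_eq_one_of_monic {f : ℤ[X]} (hf : f.Monic) (h : ∀ n, (f.coeff n).natAbs ≤ 1) :
    cycHeight f = 1 := by
  refine le_antisymm (Finset.sup_le fun n _ => h n) ?_
  calc 1 = (f.coeff f.natDegree).natAbs := by rw [hf.coeff_natDegree, Int.natAbs_one]
    _ ≤ cycHeight f := Finset.le_sup (f := fun m => (f.coeff m).natAbs)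
      (natDegree_mem_support_of_nonzero hf.ne_zero)

theorem natAbs_coeff_cyclotomic_prime_mul_prime_le_one {p q : ℕ} (hp : p.Prime) (hq : q.Prime)
    (hne : p ≠ q) (n : ℕ) : ((cyclotomic (p * q) ℤ).coeff n).natAbs ≤ 1 := by
  rcases lt_or_ge n (p * q) with hn | hn
  · rw [← Polynomial.coeff_coe, coe_cyclotomic_prime_mul_prime ℤ hp hq hne]
    refine PowerSeries.natAbs_coeff_one_sub_X_mul_le_one fun m hm => ?_
    rw [PowerSeries.coeff_one_sub_X_pow_mul_of_lt (hm.trans_lt hn),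
      PowerSeries.coeff_invOneSubXPow_mul_invOneSubXPow]
    have := card_antidiagonal_filter_dvd_le_one ((Nat.coprime_primes hp hq).mpr hne)
      (hm.trans_lt hn)
    omega
  · have hdeg : (cyclotomic (p * q) ℤ).natDegree < n := by
      rw [natDegree_cyclotomic]
      have hpq : 1 < p * q := Nat.one_lt_mul_iff.mpr ⟨hp.pos, hq.pos, Or.inl hp.one_lt⟩
      exact (Nat.totient_lt _ hpq).trans_le hn
    rw [coeff_eq_zero_of_natDegree_lt hdeg, Int.natAbs_zero]
    exact zero_le_one

theorem stmt2_general (p q : ℕ) (hp : p.Prime) (hq : q.Prime)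
    (hne : p ≠ q) : cycHeight (Polynomial.cyclotomic (p * q) ℤ) = 1 :=
  cycHeight_eq_one_of_monic (cyclotomic.monic _ ℤ)
    (natAbs_coeff_cyclotomic_prime_mul_prime_le_one hp hq hne)

theorem stmt2 (p q : ℕ) (hp : p.Prime) (hq : q.Prime) (hpo : Odd p) (hqo : Odd q)
    (hne : p ≠ q) : cycHeight (Polynomial.cyclotomic (p * q) ℤ) = 1 :=
  stmt2_general p q hp hq hne
end

section
/- The function n ↦ A(n), the height of the n-th cyclotomic polynomial, is unbounded: for every M there exists n with A(n) > M. -/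
open Polynomial

/-!
Schur's argument. Let `p₁ < ⋯ < p_t` be primes, `t` odd, and `j` with `p_t ≤ j < p_a + p_b` for
all `a ≠ b`; put `n = p₁ ⋯ p_t`. Möbius inversion of `∏_{d ∣ n} Φ_d = X ^ n - 1` gives
`Φ_n = ∏_{d ∣ n} (1 - X ^ d) ^ μ(n / d)` in `R⟦X⟧`. Modulo `X ^ (j + 1)` every divisor with two
prime factors contributes `1`, and the cross terms of `∏ (1 - X ^ pᵢ)` vanish, so
`Φ_n ≡ (1 - X)⁻¹ (1 - X ^ p₁ - ⋯ - X ^ p_t)`, whose coefficient of `X ^ j` is `1 - t`.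
Arbitrarily many primes fit in one interval `[2 ^ k, 2 ^ (k + 1))`, for otherwise `∑ 1 / p`
would converge.
-/

open Finset ArithmeticFunction
open scoped ArithmeticFunction.Moebius PowerSeries

theorem exists_le_card_primes_Ico_two_pow (t : ℕ) :
    ∃ k, t ≤ #{p ∈ Ico (2 ^ k) (2 ^ (k + 1)) | p.Prime} := by
  by_contra! few
  set f := Set.indicator {p | p.Prime} fun n : ℕ ↦ (1 : ℝ) / n
  have hf : ∀ n, 0 ≤ f n := fun n ↦ Set.indicator_nonneg (fun _ _ ↦ by positivity) n
  have block (k : ℕ) : ∑ n ∈ Ico (2 ^ k) (2 ^ (k + 1)), f n ≤ t / 2 ^ k := by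
    simp only [f, Set.indicator_apply, Set.mem_ofPred_eq, ← sum_filter]
    calc ∑ n ∈ Ico (2 ^ k) (2 ^ (k + 1)) with n.Prime, (1 : ℝ) / (n : ℕ)
        ≤ #{p ∈ Ico (2 ^ k) (2 ^ (k + 1)) | p.Prime} • ((1 : ℝ) / 2 ^ k) := by
          refine sum_le_card_nsmul _ _ _ fun n hn ↦ ?_
          have : (2 : ℝ) ^ k ≤ n := by exact_mod_cast (mem_Ico.mp (mem_filter.mp hn).1).1
          gcongr
      _ ≤ t / 2 ^ k := by
          rw [nsmul_eq_mul, mul_one_div]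
          gcongr
          exact_mod_cast (few k).le
  have dyadic (K : ℕ) : ∑ n ∈ range (2 ^ K), f n + 2 * (t / 2 ^ K) ≤ 2 * t := by
    induction K with
    | zero => simp [f, Nat.not_prime_zero]
    | succ K ih =>
      have halve : 2 * ((t : ℝ) / 2 ^ (K + 1)) = t / 2 ^ K := by
        rw [pow_succ]; field_simp
      rw [← sum_range_add_sum_Ico _ (Nat.pow_le_pow_right two_pos K.le_succ), halve]
      linarith [block K]
  refine not_summable_one_div_on_primes <| summable_of_sum_range_le (c := 2 * t) hf fun N ↦ ?_
  calc ∑ n ∈ range N, f n ≤ ∑ n ∈ range (2 ^ N), f n :=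
        sum_le_sum_of_subset_of_nonneg (range_mono N.lt_two_pow_self.le) fun n _ _ ↦ hf n
    _ ≤ 2 * t := by linarith [dyadic N, show (0 : ℝ) ≤ t / 2 ^ N by positivity]

theorem moebius_prod_primes {s : Finset ℕ} (hs : ∀ p ∈ s, p.Prime) :
    μ (∏ p ∈ s, p) = (-1) ^ #s := by
  rw [isMultiplicative_moebius.map_prod_of_prime s hs,
    prod_congr rfl fun p hp ↦ moebius_apply_prime (hs p hp), prod_const]

theorem sum_divisors_moebius_eq_zero {n : ℕ} (hn : n ≠ 1) : ∑ d ∈ n.divisors, μ d = 0 := by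
  rw [← coe_mul_zeta_apply, moebius_mul_coe_zeta, one_apply_ne hn]

theorem prod_zpow_eq_zpow_sum {G ι : Type*} [CommGroup G] (a : G) (s : Finset ι) (f : ι → ℤ) :
    ∏ i ∈ s, a ^ f i = a ^ ∑ i ∈ s, f i := by
  induction s using Finset.cons_induction with
  | empty => simp
  | cons i s hi ih => rw [prod_cons, sum_cons, ih, zpow_add]

theorem le_of_dvd_prod_primes {s : Finset ℕ} (hs : ∀ p ∈ s, p.Prime) {m : ℕ}
    (hm : ∀ p ∈ s, ∀ q ∈ s, p ≠ q → m ≤ p + q) {d : ℕ} (hd : d ∣ ∏ p ∈ s, p)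
    (hd1 : d ≠ 1) (hds : d ∉ s) : m ≤ d := by
  have hsq : Squarefree (∏ p ∈ s, p) := by
    rw [← moebius_ne_zero_iff_squarefree, moebius_prod_primes hs]
    exact pow_ne_zero _ (by norm_num)
  have hd0 : d ≠ 0 := ne_zero_of_dvd_ne_zero hsq.ne_zero hd
  have hsub : d.primeFactors ⊆ s :=
    Nat.primeFactors_prod hs ▸ Nat.primeFactors_mono hd hsq.ne_zero
  obtain ⟨p, hp, q, hq, hpq⟩ : ∃ p ∈ d.primeFactors, ∃ q ∈ d.primeFactors, p ≠ q := by
    rw [← one_lt_card]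
    by_contra! hcard
    obtain ⟨p, hp⟩ := card_le_one_iff_subset_singleton.mp hcard
    have hd_eq := Nat.prod_primeFactors_of_squarefree (hsq.squarefree_of_dvd hd)
    rcases subset_singleton_iff.mp hp with h | h <;> rw [h] at hd_eq
    · exact hd1 (by simpa using hd_eq.symm)
    · rw [prod_singleton] at hd_eq
      exact hds (hd_eq ▸ hsub (h ▸ mem_singleton_self p))
  have hp' := Nat.prime_of_mem_primeFactors hp
  have hq' := Nat.prime_of_mem_primeFactors hq
  calc m ≤ p + q := hm p (hsub hp) q (hsub hq) hpq
    _ ≤ p * q := Nat.add_le_mul hp'.two_le hq'.two_le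
    _ ≤ d := Nat.le_of_dvd (Nat.pos_of_ne_zero hd0) <|
        ((Nat.coprime_primes hp' hq').mpr hpq).mul_dvd_of_dvd_of_dvd
          (Nat.dvd_of_mem_primeFactors hp) (Nat.dvd_of_mem_primeFactors hq)

theorem prod_divisors_prod_primes_zpow_moebius {G : Type*} [CommGroup G] {s : Finset ℕ}
    (hs : ∀ p ∈ s, p.Prime) (hodd : Odd #s) {g : ℕ → G}
    (hg : ∀ d ∈ (∏ p ∈ s, p).divisors, d ≠ 1 → d ∉ s → g d = 1) :
    ∏ d ∈ (∏ p ∈ s, p).divisors, g d ^ μ ((∏ p ∈ s, p) / d) = (g 1)⁻¹ * ∏ p ∈ s, g p := by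
  have hn : ∏ p ∈ s, p ≠ 0 := prod_ne_zero_iff.mpr fun p hp ↦ (hs p hp).ne_zero
  have h1s : 1 ∉ s := fun h ↦ Nat.not_prime_one (hs 1 h)
  have hsmall : insert 1 s ⊆ (∏ p ∈ s, p).divisors :=
    insert_subset (Nat.one_mem_divisors.mpr hn) fun p hp ↦
      Nat.mem_divisors.mpr ⟨dvd_prod_of_mem _ hp, hn⟩
  rw [← prod_subset hsmall fun d hd hds ↦ by
      rw [hg d hd (fun h ↦ hds (h ▸ mem_insert_self 1 s)) (fun h ↦ hds (mem_insert_of_mem h)),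
        one_zpow],
    prod_insert h1s, Nat.div_one, moebius_prod_primes hs, hodd.neg_one_pow, zpow_neg_one]
  congr 1
  refine prod_congr rfl fun p hp ↦ ?_
  have hdiv : (∏ q ∈ s, q) / p = ∏ q ∈ s.erase p, q := by
    rw [← mul_prod_erase s _ hp, Nat.mul_div_cancel_left _ (hs p hp).pos]
  rw [hdiv, moebius_prod_primes fun q hq ↦ hs q (mem_of_mem_erase hq), card_erase_of_mem hp,
    (Nat.Odd.sub_odd hodd odd_one).neg_one_pow, zpow_one]

theorem pow_dvd_prod_one_sub_pow_sub {A : Type*} [CommRing A] (x : A) {m : ℕ} {s : Finset ℕ}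
    (hm : ∀ p ∈ s, ∀ q ∈ s, p ≠ q → m ≤ p + q) :
    x ^ m ∣ ∏ p ∈ s, (1 - x ^ p) - (1 - ∑ p ∈ s, x ^ p) := by
  induction s using Finset.induction_on with
  | empty => simp
  | insert q s hq ih =>
    have hcross : x ^ m ∣ x ^ q * ∑ p ∈ s, x ^ p := by
      rw [mul_sum]
      refine dvd_sum fun p hp ↦ ?_
      rw [← pow_add]
      exact pow_dvd_pow x (hm q (mem_insert_self q s) p (mem_insert_of_mem hp) (by grind))
    have hrest := ih fun p hp r hr ↦ hm p (mem_insert_of_mem hp) r (mem_insert_of_mem hr)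
    rw [prod_insert hq, sum_insert hq]
    convert (dvd_mul_of_dvd_right hrest (1 - x ^ q)).add hcross using 1
    ring

namespace PowerSeries

variable {R : Type*} [CommRing R]

theorem isUnit_one_sub_X_pow {d : ℕ} (hd : d ≠ 0) : IsUnit (1 - X ^ d : R⟦X⟧) := by
  simp [isUnit_iff_constantCoeff, hd]

variable (R) in
/-- `1 - X ^ d` as a unit of `R⟦X⟧`, with the junk value `1` at `d = 0`. -/
noncomputable def oneSubXPowUnit (d : ℕ) : R⟦X⟧ˣ :=
  if hd : d = 0 then 1 else (isUnit_one_sub_X_pow hd).unit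

theorem coe_oneSubXPowUnit {d : ℕ} (hd : d ≠ 0) : (oneSubXPowUnit R d : R⟦X⟧) = 1 - X ^ d := by
  simp [oneSubXPowUnit, hd]

theorem map_oneSubXPowUnit_of_le {m d : ℕ} (h : m ≤ d) :
    Units.map (Ideal.Quotient.mk (Ideal.span {(X : R⟦X⟧) ^ m})).toMonoidHom
      (oneSubXPowUnit R d) = 1 := by
  ext
  by_cases hd : d = 0
  · simp [oneSubXPowUnit, hd]
  · simp only [Units.coe_map, RingHom.toMonoidHom_eq_coe, MonoidHom.coe_coe,
      coe_oneSubXPowUnit hd, map_sub, map_one, Units.val_one, sub_eq_self]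
    exact Ideal.Quotient.eq_zero_iff_mem.mpr (Ideal.mem_span_singleton.mpr (pow_dvd_pow X h))

end PowerSeries

namespace Polynomial

open PowerSeries (oneSubXPowUnit coe_oneSubXPowUnit map_oneSubXPowUnit_of_le)

variable {R : Type*} [CommRing R]

variable (R) in
theorem isUnit_coe_cyclotomic (n : ℕ) : IsUnit (cyclotomic n R : R⟦X⟧) := by
  rw [PowerSeries.isUnit_iff_constantCoeff, ← PowerSeries.coeff_zero_eq_constantCoeff_apply,
    coeff_coe]
  rcases lt_trichotomy n 1 with hn | rfl | hn
  · simp [Nat.lt_one_iff.mp hn]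
  · simp
  · simp [cyclotomic_coeff_zero R hn]

theorem cyclotomic_unit_eq_prod_oneSubXPowUnit_zpow_moebius {n : ℕ} (hn : 1 < n) :
    (isUnit_coe_cyclotomic R n).unit = ∏ d ∈ n.divisors, oneSubXPowUnit R d ^ μ (n / d) := by
  have hprod (k : ℕ) (hk : 0 < k) :
      ∏ d ∈ k.divisors, (isUnit_coe_cyclotomic R d).unit = -oneSubXPowUnit R k := by
    apply Units.ext
    rw [Units.coe_prod, Units.val_neg, coe_oneSubXPowUnit hk.ne']
    simp only [IsUnit.unit_spec, ← coeToPowerSeries.ringHom_apply, ← map_prod,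
      prod_cyclotomic_eq_X_pow_sub_one hk]
    simp
  -- `X ^ d - 1 = -(1 - X ^ d)`, and the signs cancel because `∑ d ∣ n, μ d = 0`.
  have hsign : ∏ d ∈ n.divisors, (-1 : R⟦X⟧ˣ) ^ μ (n / d) = 1 := by
    rw [prod_zpow_eq_zpow_sum, Nat.sum_div_divisors n (μ ·),
      sum_divisors_moebius_eq_zero (by omega), zpow_zero]
  rw [← (prod_eq_iff_prod_pow_moebius_eq.mp hprod) n (by omega),
    Nat.prod_divisorsAntidiagonal' fun a b ↦ (-oneSubXPowUnit R b) ^ μ a]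
  simp only [neg_eq_neg_one_mul (oneSubXPowUnit R _), mul_zpow, prod_mul_distrib, hsign, one_mul]

theorem X_pow_dvd_coe_cyclotomic_prod_primes_sub {s : Finset ℕ} (hs : ∀ p ∈ s, p.Prime)
    (hodd : Odd #s) {m : ℕ} (hm : ∀ p ∈ s, ∀ q ∈ s, p ≠ q → m ≤ p + q) :
    PowerSeries.X ^ m ∣ (cyclotomic (∏ p ∈ s, p) R : R⟦X⟧) -
      PowerSeries.mk 1 * (1 - ∑ p ∈ s, PowerSeries.X ^ p) := by
  set π := Ideal.Quotient.mk (Ideal.span {(PowerSeries.X : R⟦X⟧) ^ m})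
  suffices π (cyclotomic (∏ p ∈ s, p) R) =
      π (PowerSeries.mk 1 * (1 - ∑ p ∈ s, PowerSeries.X ^ p)) by
    rwa [Ideal.Quotient.eq, Ideal.mem_span_singleton] at this
  have hn : 1 < ∏ p ∈ s, p := by
    obtain ⟨p, hp⟩ := card_pos.mp hodd.pos
    exact (hs p hp).one_lt.trans_le (Nat.le_of_dvd
      (Nat.pos_of_ne_zero (prod_ne_zero_iff.mpr fun q hq ↦ (hs q hq).ne_zero))
      (dvd_prod_of_mem _ hp))
  have hformula := congrArg (fun u ↦ (Units.map π.toMonoidHom u).val)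
    (cyclotomic_unit_eq_prod_oneSubXPowUnit_zpow_moebius (R := R) hn)
  simp only [map_prod, map_zpow] at hformula
  rw [prod_divisors_prod_primes_zpow_moebius hs hodd fun d hd hd1 hds ↦
    map_oneSubXPowUnit_of_le (le_of_dvd_prod_primes hs hm (Nat.dvd_of_mem_divisors hd) hd1 hds)]
    at hformula
  have hgeom : ((oneSubXPowUnit R 1)⁻¹ : R⟦X⟧ˣ) = (PowerSeries.mk 1 : R⟦X⟧) := by
    refine Units.inv_eq_of_mul_eq_one_left ?_
    rw [coe_oneSubXPowUnit one_ne_zero, pow_one]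
    exact PowerSeries.mk_one_mul_one_sub_eq_one R
  have hcross : π (∏ p ∈ s, (1 - PowerSeries.X ^ p)) = π (1 - ∑ p ∈ s, PowerSeries.X ^ p) :=
    Ideal.Quotient.eq.mpr (Ideal.mem_span_singleton.mpr (pow_dvd_prod_one_sub_pow_sub _ hm))
  simp only [IsUnit.unit_spec, Units.val_mul, Units.coe_prod, Units.coe_map_inv,
    Units.coe_map, RingHom.toMonoidHom_eq_coe, MonoidHom.coe_coe] at hformula
  rw [hformula, map_mul, ← hcross, ← hgeom, map_prod]
  congr 1
  exact prod_congr rfl fun p hp ↦ by rw [coe_oneSubXPowUnit (hs p hp).ne_zero]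

theorem coeff_cyclotomic_prod_primes {s : Finset ℕ} (hs : ∀ p ∈ s, p.Prime) (hodd : Odd #s)
    {j : ℕ} (hle : ∀ p ∈ s, p ≤ j) (hlt : ∀ p ∈ s, ∀ q ∈ s, p ≠ q → j < p + q) :
    (cyclotomic (∏ p ∈ s, p) R).coeff j = 1 - #s := by
  have hdvd := X_pow_dvd_coe_cyclotomic_prod_primes_sub (R := R) hs hodd (m := j + 1) hlt
  have hj := PowerSeries.X_pow_dvd_iff.mp hdvd j j.lt_succ_self
  rw [map_sub, coeff_coe, sub_eq_zero] at hj
  rw [hj, mul_sub, mul_one, mul_sum, map_sub, map_sum, PowerSeries.coeff_mk]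
  simp [PowerSeries.coeff_mul_X_pow', filter_true_of_mem hle]

end Polynomial

theorem natAbs_coeff_le_cycHeight (f : ℤ[X]) (j : ℕ) : (f.coeff j).natAbs ≤ cycHeight f := by
  by_cases h : f.coeff j = 0
  · simp [h]
  · exact le_sup (f := fun m ↦ (f.coeff m).natAbs) (mem_support_iff.mpr h)

theorem stmt5 (M : ℕ) : ∃ n : ℕ, cycHeight (Polynomial.cyclotomic n ℤ) > M := by
  obtain ⟨k, hk⟩ := exists_le_card_primes_Ico_two_pow (2 * M + 3)
  obtain ⟨s, hsub, hcard⟩ := exists_subset_card_eq hk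
  have hmem (p : ℕ) (hp : p ∈ s) : p.Prime ∧ 2 ^ k ≤ p ∧ p < 2 ^ (k + 1) := by
    have := hsub hp
    simp only [mem_filter, mem_Ico] at this
    exact ⟨this.2, this.1⟩
  have hcoeff := coeff_cyclotomic_prod_primes (R := ℤ) (s := s) (j := 2 ^ (k + 1))
    (fun p hp ↦ (hmem p hp).1) (hcard ▸ ⟨M + 1, by ring⟩) (fun p hp ↦ (hmem p hp).2.2.le)
    fun p hp q hq hpq ↦ by
      have := hmem p hp
      have := hmem q hq
      rw [pow_succ]
      omega
  refine ⟨∏ p ∈ s, p, lt_of_lt_of_le ?_ (natAbs_coeff_le_cycHeight _ (2 ^ (k + 1)))⟩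
  rw [hcoeff, hcard]
  omega
end

section
/- Let p, q, r be integers greater than 2 that are pairwise coprime. Then the rational function (x^{pqr} - 1)(x^p - 1)(x^q - 1)(x^r - 1) / ((x^{pq} - 1)(x^{qr} - 1)(x^{rp} - 1)(x - 1)) is a polynomial with integer coefficients. -/
open Polynomial

noncomputable def Npoly (p q r : ℕ) : Polynomial ℤ :=
  (X ^ (p * q * r) - 1) * (X ^ p - 1) * (X ^ q - 1) * (X ^ r - 1)

noncomputable def Dpoly (p q r : ℕ) : Polynomial ℤ :=
  (X ^ (p * q) - 1) * (X ^ (q * r) - 1) * (X ^ (r * p) - 1) * (X - 1)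

theorem stmt7 (p q r : ℕ) (hp : 2 < p) (hq : 2 < q) (hr : 2 < r)
    (hpq : Nat.Coprime p q) (hqr : Nat.Coprime q r) (hrp : Nat.Coprime r p) :
    ∃ Q : Polynomial ℤ, Q * Dpoly p q r = Npoly p q r := by
  have hp0 : 0 < p := by omega
  have hq0 : 0 < q := by omega
  have hr0 : 0 < r := by omega
  set f : ℕ → Polynomial ℤ := fun d => cyclotomic d ℤ with hf
  set D : Multiset ℕ :=
    (p * q).divisors.val + (q * r).divisors.val + (r * p).divisors.val + (Nat.divisors 1).val with hD
  set N : Multiset ℕ :=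
    (p * q * r).divisors.val + p.divisors.val + q.divisors.val + r.divisors.val with hN
  have key1 : ∀ d, d ∣ p * q → d ∣ q * r → d ∣ q := by
    intro d h1 h2
    have : d ∣ Nat.gcd (q * p) (q * r) := Nat.dvd_gcd (by rwa [mul_comm q p]) h2
    rwa [Nat.gcd_mul_left, hrp.symm.gcd_eq_one, mul_one] at this
  have key2 : ∀ d, d ∣ q * r → d ∣ r * p → d ∣ r := by
    intro d h1 h2
    have : d ∣ Nat.gcd (r * q) (r * p) := Nat.dvd_gcd (by rwa [mul_comm q r] at h1) h2
    rwa [Nat.gcd_mul_left, hpq.symm.gcd_eq_one, mul_one] at this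
  have key3 : ∀ d, d ∣ r * p → d ∣ p * q → d ∣ p := by
    intro d h1 h2
    have : d ∣ Nat.gcd (p * r) (p * q) := Nat.dvd_gcd (by rwa [mul_comm r p] at h1) h2
    rwa [Nat.gcd_mul_left, hqr.symm.gcd_eq_one, mul_one] at this
  have keyq : ∀ d, d ∣ q → d ∣ r * p → d = 1 := by
    intro d h1 h2
    have hc : Nat.Coprime q (r * p) := Nat.Coprime.mul_right hqr hpq.symm
    exact Nat.eq_one_of_dvd_coprimes hc h1 h2
  have hDN : D ≤ N := by
    rw [Multiset.le_iff_count]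
    intro a
    have cval : ∀ n : ℕ, n ≠ 0 →
        Multiset.count a n.divisors.val = if a ∣ n then 1 else 0 := by
      intro n hn
      rw [Multiset.count_eq_of_nodup n.divisors.nodup]
      simp [Nat.mem_divisors, hn]
    rw [hD, hN]
    simp only [Multiset.count_add]
    rw [cval (p * q) (by positivity), cval (q * r) (by positivity),
      cval (r * p) (by positivity), cval 1 one_ne_zero,
      cval (p * q * r) (by positivity), cval p hp0.ne', cval q hq0.ne', cval r hr0.ne']
    by_cases ha1 : a = 1
    · simp [ha1]
    · simp only [Nat.dvd_one, ha1, if_false]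
      by_cases hA : a ∣ p * q <;> by_cases hB : a ∣ q * r <;> by_cases hC : a ∣ r * p
      · exact absurd (keyq a (key1 a hA hB) hC) ha1
      · have h1 : a ∣ q := key1 a hA hB
        have h2 : a ∣ p * q * r := dvd_mul_of_dvd_left hA r
        simp [hA, hB, hC, h1, h2] <;> (split_ifs <;> omega)
      · have h1 : a ∣ p := key3 a hC hA
        have h2 : a ∣ p * q * r := dvd_mul_of_dvd_left hA r
        simp [hA, hB, hC, h1, h2] <;> (split_ifs <;> omega)
      · have h2 : a ∣ p * q * r := dvd_mul_of_dvd_left hA r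
        simp [hA, hB, hC, h2] <;> (split_ifs <;> omega)
      · have h1 : a ∣ r := key2 a hB hC
        have h2 : a ∣ p * q * r := by rw [mul_assoc]; exact dvd_mul_of_dvd_right hB p
        simp [hA, hB, hC, h1, h2] <;> (split_ifs <;> omega)
      · have h2 : a ∣ p * q * r := by rw [mul_assoc]; exact dvd_mul_of_dvd_right hB p
        simp [hA, hB, hC, h2] <;> (split_ifs <;> omega)
      · have h2 : a ∣ p * q * r := by
          rcases hC with ⟨c, hc⟩
          exact ⟨q * c, by rw [show p * q * r = q * (r * p) by ring, hc]; ring⟩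
        simp [hA, hB, hC, h2] <;> (split_ifs <;> omega)
      · simp [hA, hB, hC] <;> (split_ifs <;> omega)
  obtain ⟨u, hu⟩ := Multiset.le_iff_exists_add.mp hDN
  refine ⟨(u.map f).prod, ?_⟩
  have hprod : ∀ n : ℕ, 0 < n → (n.divisors.val.map f).prod = X ^ n - 1 := by
    intro n hn
    rw [← prod_cyclotomic_eq_X_pow_sub_one hn ℤ, Finset.prod_eq_multiset_prod]
  have hNp : (N.map f).prod = Npoly p q r := by
    rw [hN]
    simp only [Multiset.map_add, Multiset.prod_add]
    rw [hprod _ (by positivity), hprod _ hp0, hprod _ hq0, hprod _ hr0]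
    rfl
  have hDp : (D.map f).prod = Dpoly p q r := by
    rw [hD]
    simp only [Multiset.map_add, Multiset.prod_add]
    rw [hprod _ (by positivity), hprod _ (by positivity), hprod _ (by positivity),
      hprod _ one_pos, pow_one]
    rfl
  calc (u.map f).prod * Dpoly p q r
      = ((D + u).map f).prod := by
        rw [Multiset.map_add, Multiset.prod_add, hDp, mul_comm]
    _ = Npoly p q r := by rw [← hu, hNp]
end

section
/- Let p, q be distinct odd primes and let r be a prime with r ≡ 1 (mod pq) or r ≡ -1 (mod pq), r distinct from p and q. Then the height of Φ_{pqr} equals 1. -/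
/-!
Write `w = p q` and `r = k w + ε` with `ε = ±1`. Since `Φ_{pqr}(X) = Φ_{pq}(X^r) / Φ_{pq}(X)` and
`1 / Φ_{pq} = (1 + ⋯ + X^{p-1}) (1 - X^q) / (1 - X^w)`, the coefficient `a_{pqr}(n)` is a window
of `p` coefficients of `Φ_{pq}(X^r) / (1 - X^w)` minus the same window shifted by `q` (Kaplan's
lemma). Because `r ≡ ±1 (mod w)`, those coefficients are, block by block of length `w`, the
differences `g(x) - g(x - 1)` of the indicator `g` of the semigroup `ℕ p + ℕ q` below `w`, cut off
at a level `M` depending only on the block. Telescoping the windows turns `a_{pqr}(n)` into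
`± (T(x) - T(x - p) - T(x - q) + T(x - p - q))` for `T = g ∘ min M`, and uniqueness of the
representation `i p + j q < w` bounds this mixed difference by `1`.
-/

open Polynomial

open Finset

def InSemigroup (p q : ℕ) (x : ℤ) : Prop := ∃ i j : ℕ, x = i * p + j * q

theorem eq_and_eq_of_mul_add_mul_eq {p q i j i' j' : ℕ} (hco : p.Coprime q) (hi : i < q)
    (hi' : i' < q) (h : i * p + j * q = i' * p + j' * q) : i = i' ∧ j = j' := by
  have hmod : p * i ≡ p * i' [MOD q] := by
    have := congrArg (· % q) h
    simpa [Nat.ModEq, Nat.add_mul_mod_self_right, mul_comm] using this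
  obtain rfl :=
    (Nat.ModEq.cancel_left_of_coprime (Nat.gcd_comm q p ▸ hco) hmod).eq_of_lt_of_lt hi hi'
  exact ⟨rfl, Nat.eq_of_mul_eq_mul_right (by omega) (Nat.add_left_cancel h)⟩

/-- Below `p q` the two representations of `x` must coincide. -/
theorem InSemigroup.sub_add_sub {p q : ℕ} (hco : p.Coprime q) {x : ℤ} (hx : x < p * q)
    (hp : InSemigroup p q (x - p)) (hq : InSemigroup p q (x - q)) :
    InSemigroup p q (x - p - q) := by
  obtain ⟨i, j, hij⟩ := hp
  obtain ⟨i', j', hij'⟩ := hq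
  have hx₁ : (i + 1) * p + j * q < q * p := by zify; linarith
  have hx₂ : i' * p + (j' + 1) * q < q * p := by zify; linarith
  obtain ⟨-, rfl⟩ := eq_and_eq_of_mul_add_mul_eq hco
    (Nat.lt_of_mul_lt_mul_right (a := p) (by nlinarith))
    (Nat.lt_of_mul_lt_mul_right (a := p) (by nlinarith))
    (show (i + 1) * p + j * q = i' * p + (j' + 1) * q by zify; linarith)
  exact ⟨i, j', by push_cast at hij; linarith⟩

open Classical in
noncomputable def semigroupIndicator (p q : ℕ) (x : ℤ) : ℤ :=
  if x < p * q ∧ InSemigroup p q x then 1 else 0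

section SemigroupIndicator

variable {p q : ℕ}

theorem semigroupIndicator_eq_zero_or_one (x : ℤ) :
    semigroupIndicator p q x = 0 ∨ semigroupIndicator p q x = 1 := by
  unfold semigroupIndicator; split_ifs <;> simp

theorem semigroupIndicator_eq_one_iff {x : ℤ} :
    semigroupIndicator p q x = 1 ↔ x < p * q ∧ InSemigroup p q x := by
  unfold semigroupIndicator; split_ifs <;> simp_all

theorem semigroupIndicator_of_neg {x : ℤ} (hx : x < 0) : semigroupIndicator p q x = 0 := by
  refine (semigroupIndicator_eq_zero_or_one x).resolve_right fun h => ?_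
  obtain ⟨-, i, j, rfl⟩ := semigroupIndicator_eq_one_iff.1 h
  have : (0 : ℤ) ≤ i * p + j * q := by positivity
  omega

end SemigroupIndicator

noncomputable def cutoff (p q : ℕ) (M x : ℤ) : ℤ := semigroupIndicator p q (min x M)

def mixedDiff (p q : ℕ) (h : ℤ → ℤ) (x : ℤ) : ℤ := h x - h (x - p) - h (x - q) + h (x - p - q)

theorem abs_mixedDiff_cutoff_le_one {p q : ℕ} (hco : p.Coprime q) (M : ℤ) {x : ℤ}
    (hx : x < p * q) : |mixedDiff p q (cutoff p q M) x| ≤ 1 := by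
  have h01 := fun y => semigroupIndicator_eq_zero_or_one (p := p) (q := q) y
  unfold mixedDiff cutoff
  rw [abs_le]
  by_cases hMp : M ≤ x - p
  · rw [min_eq_right (show M ≤ x by omega), min_eq_right hMp]
    rcases h01 (min (x - q) M) with h | h <;> rcases h01 (min (x - p - q) M) with h' | h' <;> omega
  by_cases hMq : M ≤ x - q
  · rw [min_eq_right (show M ≤ x by omega), min_eq_right hMq]
    rcases h01 (min (x - p) M) with h | h <;> rcases h01 (min (x - p - q) M) with h' | h' <;> omega
  rw [min_eq_left (show x - p ≤ M by omega), min_eq_left (show x - q ≤ M by omega),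
    min_eq_left (show x - p - q ≤ M by omega)]
  have hup : semigroupIndicator p q (x - p - q) = 1 → semigroupIndicator p q (x - p) = 1 := by
    simp only [semigroupIndicator_eq_one_iff]
    rintro ⟨-, i, j, h⟩
    exact ⟨by nlinarith, i, j + 1, by push_cast; linarith⟩
  have hdown : semigroupIndicator p q (x - p) = 1 → semigroupIndicator p q (x - q) = 1 →
      semigroupIndicator p q (x - p - q) = 1 := by
    simp only [semigroupIndicator_eq_one_iff]
    exact fun ⟨_, hp⟩ ⟨_, hq⟩ => ⟨by nlinarith, InSemigroup.sub_add_sub hco hx hp hq⟩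
  rcases h01 (min x M) with h | h <;> rcases h01 (x - p) with ha | ha <;>
    rcases h01 (x - q) with hb | hb <;> rcases h01 (x - p - q) with hc | hc <;> simp_all

noncomputable def coeffInt (f : ℤ[X]) (n : ℤ) : ℤ := if 0 ≤ n then f.coeff n.toNat else 0

section CoeffInt

variable (f g : ℤ[X])

@[simp] theorem coeffInt_natCast (n : ℕ) : coeffInt f n = f.coeff n := by simp [coeffInt]

theorem coeffInt_of_neg {n : ℤ} (hn : n < 0) : coeffInt f n = 0 := if_neg (by omega)

theorem coeffInt_of_natDegree_lt {n : ℤ} (hn : f.natDegree < n) : coeffInt f n = 0 := by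
  unfold coeffInt
  split_ifs
  · exact coeff_eq_zero_of_natDegree_lt (by omega)
  · rfl

theorem coeffInt_sub (n : ℤ) : coeffInt (f - g) n = coeffInt f n - coeffInt g n := by
  unfold coeffInt; split_ifs <;> simp

theorem coeffInt_sum {ι : Type*} (s : Finset ι) (F : ι → ℤ[X]) (n : ℤ) :
    coeffInt (∑ i ∈ s, F i) n = ∑ i ∈ s, coeffInt (F i) n := by
  unfold coeffInt; split_ifs <;> simp

theorem coeffInt_X_pow (k : ℕ) (n : ℤ) : coeffInt (X ^ k) n = if n = k then 1 else 0 := by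
  unfold coeffInt
  rw [coeff_X_pow]
  split_ifs <;> omega

theorem coeffInt_mul_X_pow (k : ℕ) (n : ℤ) : coeffInt (f * X ^ k) n = coeffInt f (n - k) := by
  unfold coeffInt
  rw [coeff_mul_X_pow']
  split_ifs <;> first | omega | congr 1; omega

theorem coeffInt_mul_X_pow_sub_one (k : ℕ) (n : ℤ) :
    coeffInt (f * (X ^ k - 1)) n = coeffInt f (n - k) - coeffInt f n := by
  rw [mul_sub, mul_one, coeffInt_sub, coeffInt_mul_X_pow]

variable {r : ℕ} (hr : 0 < r)
include hr

theorem coeffInt_expand_mul (y : ℤ) : coeffInt (expand ℤ r f) (r * y) = coeffInt f y := by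
  rcases lt_or_ge y 0 with hy | hy
  · rw [coeffInt_of_neg _ hy, coeffInt_of_neg _ (by nlinarith)]
  · lift y to ℕ using hy
    rw [← Nat.cast_mul, coeffInt_natCast, coeffInt_natCast, coeff_expand hr,
      if_pos (dvd_mul_right _ _), Nat.mul_div_cancel_left _ hr]

theorem coeffInt_expand_of_not_dvd {u : ℤ} (hu : ¬ (r : ℤ) ∣ u) :
    coeffInt (expand ℤ r f) u = 0 := by
  rcases lt_or_ge u 0 with hu' | hu'
  · exact coeffInt_of_neg _ hu'
  · lift u to ℕ using hu'
    rw [coeffInt_natCast, coeff_expand hr, if_neg (by exact_mod_cast hu)]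

end CoeffInt

section CyclotomicMulPrime

variable {p q : ℕ} (hp : p.Prime) (hq : q.Prime) (hpq : p ≠ q)
include hp hq hpq

theorem expand_cyclotomic_prime :
    expand ℤ q (cyclotomic p ℤ) = cyclotomic (p * q) ℤ * cyclotomic p ℤ :=
  cyclotomic_expand_eq_cyclotomic_mul hq
    (fun h => hpq ((Nat.prime_dvd_prime_iff_eq hq hp).1 h).symm) ℤ

theorem cyclotomic_mul_cyclotomic_mul_X_pow_sub_one :
    cyclotomic (p * q) ℤ * cyclotomic p ℤ * (X ^ q - 1) = X ^ (p * q) - 1 := by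
  have := Fact.mk hp
  have h := congrArg (expand ℤ q) (cyclotomic_prime_mul_X_sub_one ℤ p)
  rwa [map_mul, expand_cyclotomic_prime hp hq hpq, map_sub, map_sub, map_one, expand_X, map_pow,
    expand_X, ← pow_mul, mul_comm q p] at h

end CyclotomicMulPrime

noncomputable def semigroupPoly (p q : ℕ) : ℤ[X] :=
  ∑ ij ∈ range q ×ˢ range p, X ^ (ij.1 * p + ij.2 * q)

section SemigroupPoly

variable {p q : ℕ}

theorem semigroupPoly_mul_X_sub_one (hp : p.Prime) (hq : q.Prime) (hpq : p ≠ q) :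
    semigroupPoly p q * (X - 1) = cyclotomic (p * q) ℤ * (X ^ (p * q) - 1) := by
  have := Fact.mk hp
  have hsplit : semigroupPoly p q = (∑ i ∈ range q, (X ^ p) ^ i) * expand ℤ q (cyclotomic p ℤ) := by
    rw [semigroupPoly, sum_product, cyclotomic_prime, map_sum, sum_mul_sum]
    simp only [map_pow, expand_X, ← pow_mul, ← pow_add, mul_comm]
  rw [hsplit, expand_cyclotomic_prime hp hq hpq]
  linear_combination (cyclotomic (p * q) ℤ) * (geom_sum_mul (X ^ p : ℤ[X]) q) +
    (∑ i ∈ range q, (X ^ p : ℤ[X]) ^ i) * cyclotomic (p * q) ℤ *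
      cyclotomic_prime_mul_X_sub_one ℤ p

theorem coeffInt_semigroupPoly (hco : p.Coprime q) {n : ℤ} (hn : n < p * q) :
    coeffInt (semigroupPoly p q) n = semigroupIndicator p q n := by
  simp only [semigroupPoly, coeffInt_sum, coeffInt_X_pow, Nat.cast_add, Nat.cast_mul]
  by_cases hS : InSemigroup p q n
  · obtain ⟨i, j, rfl⟩ := hS
    have hi : i < q := by
      by_contra! h
      have : ((q * p : ℕ) : ℤ) ≤ i * p := by exact_mod_cast Nat.mul_le_mul_right p h
      push_cast at this; nlinarith
    have hj : j < p := by
      by_contra! h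
      have : ((p * q : ℕ) : ℤ) ≤ j * q := by exact_mod_cast Nat.mul_le_mul_right q h
      push_cast at this; nlinarith
    rw [sum_eq_single (i, j), if_pos rfl, semigroupIndicator_eq_one_iff.2 ⟨hn, i, j, rfl⟩]
    · rintro ⟨i', j'⟩ hmem hne
      rw [if_neg]
      intro h
      obtain ⟨rfl, rfl⟩ := eq_and_eq_of_mul_add_mul_eq hco hi (mem_range.1 (mem_product.1 hmem).1)
        (by exact_mod_cast h)
      exact hne rfl
    · exact fun h => absurd (mem_product.2 ⟨mem_range.2 hi, mem_range.2 hj⟩) h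
  · rw [sum_eq_zero, semigroupIndicator, if_neg fun h => hS h.2]
    rintro ⟨i, j⟩ -
    exact if_neg fun h => hS ⟨i, j, h⟩

end SemigroupPoly

theorem coeffInt_cyclotomic_mul {p q : ℕ} (hp : p.Prime) (hq : q.Prime) (hpq : p ≠ q) {n : ℤ}
    (hn : n < p * q) :
    coeffInt (cyclotomic (p * q) ℤ) n =
      semigroupIndicator p q n - semigroupIndicator p q (n - 1) := by
  have hco : p.Coprime q := (Nat.coprime_primes hp hq).2 hpq
  have h := congrArg (coeffInt · n) (semigroupPoly_mul_X_sub_one hp hq hpq)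
  rw [show (X : ℤ[X]) - 1 = X ^ 1 - 1 by rw [pow_one]] at h
  simp only [coeffInt_mul_X_pow_sub_one, Nat.cast_one, Nat.cast_mul] at h
  rw [coeffInt_of_neg _ (show n - p * q < 0 by omega), coeffInt_semigroupPoly hco hn,
    coeffInt_semigroupPoly hco (by omega)] at h
  linarith

theorem coeffInt_mul_cyclotomic_prime {p : ℕ} (hp : p.Prime) (f : ℤ[X]) (n : ℤ) :
    coeffInt (f * cyclotomic p ℤ) n = ∑ i ∈ range p, coeffInt f (n - i) := by
  have := Fact.mk hp
  simp only [cyclotomic_prime, mul_sum, coeffInt_sum, coeffInt_mul_X_pow]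

theorem Function.Periodic.eq_zero_of_eq_zero_of_neg {h : ℤ → ℤ} {w : ℤ} (hper : h.Periodic w)
    (hw : 0 < w) (hneg : ∀ n < 0, h n = 0) (n : ℤ) : h n = 0 := by
  rw [← hper.sub_nsmul_eq (n.toNat + 1)]
  exact hneg _ (by rw [nsmul_eq_mul]; push_cast; nlinarith [Int.self_le_toNat n])

section Kaplan

variable {p q r : ℕ} (hp : p.Prime) (hq : q.Prime) (hr : r.Prime) (hpq : p ≠ q) (hrpq : ¬ r ∣ p * q)
include hp hq hr hpq hrpq

theorem cyclotomic_mul_mul_mul_X_pow_sub_one :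
    cyclotomic (p * q * r) ℤ * (X ^ (p * q) - 1) =
      expand ℤ r (cyclotomic (p * q) ℤ) * cyclotomic p ℤ * (X ^ q - 1) := by
  rw [cyclotomic_expand_eq_cyclotomic_mul hr hrpq,
    ← cyclotomic_mul_cyclotomic_mul_X_pow_sub_one hp hq hpq]
  ring

/-- Kaplan's lemma: `Φ_{pqr} = Φ_{pq}(X^r) (1 + ⋯ + X^{p-1}) (1 - X^q) / (1 - X^{pq})`, where `b`
plays the role of `Φ_{pq}(X^r) / (1 - X^{pq})`. -/
theorem coeffInt_cyclotomic_mul_mul (b : ℤ → ℤ) (hb_neg : ∀ u < 0, b u = 0)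
    (hb : ∀ u, b u - b (u - p * q) = coeffInt (expand ℤ r (cyclotomic (p * q) ℤ)) u) (n : ℤ) :
    coeffInt (cyclotomic (p * q * r) ℤ) n = ∑ t ∈ range p, (b (n - t) - b (n - q - t)) := by
  set E := expand ℤ r (cyclotomic (p * q) ℤ)
  rw [← sub_eq_zero]
  revert n
  refine Function.Periodic.eq_zero_of_eq_zero_of_neg (w := p * q) (fun x => ?_)
    (by have := hp.pos; have := hq.pos; positivity) (fun n hn => ?_)
  · have h := congrArg (coeffInt · (x + p * q))
      (cyclotomic_mul_mul_mul_X_pow_sub_one hp hq hr hpq hrpq)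
    simp only [coeffInt_mul_X_pow_sub_one, coeffInt_mul_cyclotomic_prime hp, Nat.cast_mul,
      add_sub_cancel_right] at h
    have hE : ∀ t : ℕ, (b (x + p * q - t) - b (x + p * q - q - t)) - (b (x - t) - b (x - q - t)) =
        coeffInt E (x + p * q - t) - coeffInt E (x + p * q - q - t) := by
      intro t
      have h₁ := hb (x + p * q - t)
      have h₂ := hb (x + p * q - q - t)
      rw [show x + p * q - t - p * q = x - t by ring] at h₁
      rw [show x + p * q - q - t - p * q = x - q - t by ring] at h₂
      linarith
    have hR := sum_congr rfl fun t (_ : t ∈ range p) => hE t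
    simp only [sum_sub_distrib] at hR h ⊢
    linarith
  · rw [coeffInt_of_neg _ hn, sum_eq_zero fun t _ => by
      rw [hb_neg _ (by omega), hb_neg _ (by omega), sub_self]]
    simp

end Kaplan

/-- The coefficient at `u` of `f(X^r) / (1 - X^w)`, written for `ε r ≡ 1 (mod w)`: the only
`s < w` with `r s ≡ u (mod w)` is `s = ε u mod w`. -/
noncomputable def residueTerm (f : ℤ[X]) (w : ℤ) (r : ℕ) (ε u : ℤ) : ℤ :=
  if r * (ε * u % w) ≤ u then coeffInt f (ε * u % w) else 0

section ResidueTerm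

variable {f : ℤ[X]} {w : ℤ} {r : ℕ} {ε : ℤ}

theorem residueTerm_of_neg (hw : 0 < w) {u : ℤ} (hu : u < 0) : residueTerm f w r ε u = 0 :=
  if_neg fun h => by
    have : 0 ≤ (r : ℤ) * (ε * u % w) := mul_nonneg (by positivity) (Int.emod_nonneg _ hw.ne')
    omega

theorem residueTerm_sub_residueTerm_sub (hw : 0 < w) (hf : (f.natDegree : ℤ) < w) (hr : 0 < r)
    (hε : ε * r ≡ 1 [ZMOD w]) (u : ℤ) :
    residueTerm f w r ε u - residueTerm f w r ε (u - w) = coeffInt (expand ℤ r f) u := by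
  set m := ε * u % w with hm
  have hm₀ : 0 ≤ m := Int.emod_nonneg _ hw.ne'
  have hmw : m < w := Int.emod_lt_of_pos _ hw
  have hm' : ε * (u - w) % w = m := by
    rw [show ε * (u - w) = ε * u + w * (-ε) by ring, Int.add_mul_emod_self_left]
  have hεu : ∀ y, ε * (r * y) ≡ y [ZMOD w] := fun y => by
    simpa [mul_assoc] using hε.mul_right y
  have hrm : r * m ≡ u [ZMOD w] :=
    ((Int.mod_modEq _ w).mul_left r).trans
      (by rw [show (r : ℤ) * (ε * u) = ε * (r * u) by ring]; exact hεu u)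
  unfold residueTerm
  rw [hm', ← hm]
  by_cases hhit : u = r * m
  · rw [if_pos hhit.ge, if_neg (by omega), hhit, coeffInt_expand_mul _ hr, sub_zero]
  have hE : coeffInt (expand ℤ r f) u = 0 := by
    by_cases hdvd : (r : ℤ) ∣ u
    · obtain ⟨y, rfl⟩ := hdvd
      rw [coeffInt_expand_mul _ hr]
      have hym : y % w = m := by rw [hm]; exact (hεu y).symm
      rcases lt_or_ge y 0 with hy | hy
      · exact coeffInt_of_neg _ hy
      · refine coeffInt_of_natDegree_lt _ (lt_of_lt_of_le hf ?_)
        by_contra! hyw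
        exact hhit (by rw [← hym, Int.emod_eq_of_lt hy hyw])
    · exact coeffInt_expand_of_not_dvd _ hr hdvd
  rw [hE]
  obtain ⟨c, hc⟩ := hrm.dvd
  have : w ≤ w * c ∨ w * c ≤ -w := by
    rcases lt_trichotomy c 0 with h | h | h
    · right; nlinarith
    · exact absurd (by rw [h, mul_zero] at hc; omega) hhit
    · left; nlinarith
  split_ifs <;> omega

end ResidueTerm

section Cutoff

variable {p q : ℕ}

theorem cutoff_of_neg (M : ℤ) {x : ℤ} (hx : x < 0) : cutoff p q M x = 0 :=
  semigroupIndicator_of_neg (lt_of_le_of_lt (min_le_left _ _) hx)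

theorem cutoff_sub_cutoff_sub_one (M x : ℤ) :
    cutoff p q M x - cutoff p q M (x - 1) =
      if x ≤ M then semigroupIndicator p q x - semigroupIndicator p q (x - 1) else 0 := by
  unfold cutoff
  split_ifs with h
  · rw [min_eq_left h, min_eq_left (by omega)]
  · rw [min_eq_right (by omega), min_eq_right (by omega), sub_self]

end Cutoff

theorem sum_range_sub_sub_one (h : ℤ → ℤ) (x : ℤ) (n : ℕ) :
    ∑ t ∈ range n, (h (x - t) - h (x - t - 1)) = h x - h (x - n) := by
  simpa [sub_sub] using sum_range_sub' (fun t : ℕ => h (x - t)) n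

/-- `residueTerm` for `r = k p q + ε`, read off the block `v / (p q)` and the position `v % (p q)`
of `v = ε u`; `φ` gives the cutoff of each block. -/
noncomputable def blockTerm (p q : ℕ) (φ : ℤ → ℤ) (v : ℤ) : ℤ :=
  cutoff p q (φ (v / (p * q))) (v % (p * q)) - cutoff p q (φ (v / (p * q))) (v % (p * q) - 1)

section BlockTerm

variable {p q : ℕ}

theorem residueTerm_eq_blockTerm (hp : p.Prime) (hq : q.Prime) (hpq : p ≠ q) {r : ℕ} {k ε : ℤ}
    (hk : 0 < k) (hε : ε * ε = 1) (hr : (r : ℤ) = k * (p * q) + ε) (u : ℤ) :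
    residueTerm (cyclotomic (p * q) ℤ) (p * q) r ε u =
      blockTerm p q (fun s => ε * s / k) (ε * u) := by
  have hw : (0 : ℤ) < p * q := by have := hp.pos; have := hq.pos; positivity
  set v := ε * u
  have hdiv := Int.mul_ediv_add_emod v (p * q)
  have hm₀ : 0 ≤ v % (p * q) := Int.emod_nonneg _ hw.ne'
  have hmw : v % (p * q) < p * q := Int.emod_lt_of_pos _ hw
  have hcond : (r : ℤ) * (v % (p * q)) ≤ u ↔ v % (p * q) ≤ ε * (v / (p * q)) / k := by
    have hu : u = ε * v := by rw [← mul_assoc, hε, one_mul]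
    have h : (r : ℤ) * (v % (p * q)) - u =
        p * q * (v % (p * q) * k) - p * q * (ε * (v / (p * q))) := by
      rw [hr, hu]; nth_rewrite 2 [← hdiv]; ring
    rw [← sub_nonpos, h, sub_nonpos, mul_le_mul_iff_right₀ hw, Int.le_ediv_iff_mul_le hk]
  unfold residueTerm blockTerm
  rw [cutoff_sub_cutoff_sub_one, coeffInt_cyclotomic_mul hp hq hpq hmw]
  exact if_congr hcond rfl rfl

theorem blockTerm_mul_add (hw : (0 : ℤ) < p * q) (φ : ℤ → ℤ) (s : ℤ) {y : ℤ} (hy : -(p * q) ≤ y)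
    (hyw : y < p * q) (hφ : y < 0 → φ (s - 1) < y + p * q) :
    blockTerm p q φ (p * q * s + y) = cutoff p q (φ s) y - cutoff p q (φ s) (y - 1) := by
  unfold blockTerm
  rcases le_or_gt 0 y with hy₀ | hy₀
  · obtain ⟨h₁, h₂⟩ := (Int.ediv_emod_unique hw).2 (⟨by ring, hy₀, hyw⟩ :
      y + p * q * s = p * q * s + y ∧ _)
    rw [h₁, h₂]
  · obtain ⟨h₁, h₂⟩ := (Int.ediv_emod_unique hw).2 (⟨by ring, by omega, by omega⟩ :
      (y + p * q) + p * q * (s - 1) = p * q * s + y ∧ _)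
    rw [h₁, h₂, cutoff_sub_cutoff_sub_one, if_neg (by linarith [hφ hy₀]), cutoff_of_neg _ hy₀,
      cutoff_of_neg _ (by omega), sub_self]

/-- A window of `p` consecutive terms reaches back at most `p + q - 1` positions, so it lies in
the block `s` and the tail of block `s - 1`, where `φ (s - 1)` kills every term. -/
theorem sum_blockTerm_sub (hp : 0 < p) (hq : 0 < q) (φ : ℤ → ℤ) (s : ℤ) {x : ℤ} (hx₀ : 0 ≤ x)
    (hx : x < p * q) (hφ : φ (s - 1) ≤ x + p * q - p - q) :
    ∑ t ∈ range p, (blockTerm p q φ (p * q * s + x - t) - blockTerm p q φ (p * q * s + x - q - t)) =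
      mixedDiff p q (cutoff p q (φ s)) x := by
  have hw : (0 : ℤ) < p * q := by positivity
  have hpq_le : (p : ℤ) + q ≤ p * q + 1 := by
    nlinarith [(by exact_mod_cast hp : (1 : ℤ) ≤ p), (by exact_mod_cast hq : (1 : ℤ) ≤ q)]
  have key : ∀ y, x - p - q < y → y ≤ x → blockTerm p q φ (p * q * s + y) =
      cutoff p q (φ s) y - cutoff p q (φ s) (y - 1) := fun y h₁ h₂ =>
    blockTerm_mul_add hw φ s (by omega) (by omega) (fun _ => by omega)
  have hsum : ∀ z, x - q ≤ z → z ≤ x → ∑ t ∈ range p, blockTerm p q φ (p * q * s + z - t) =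
      cutoff p q (φ s) z - cutoff p q (φ s) (z - p) := fun z h₁ h₂ => by
    rw [← sum_range_sub_sub_one]
    refine sum_congr rfl fun t ht => ?_
    have := mem_range.1 ht
    rw [add_sub_assoc, key _ (by omega) (by omega)]
  have hsum' := hsum (x - q) le_rfl (by omega)
  simp only [← add_sub_assoc] at hsum'
  rw [sum_sub_distrib, hsum x (by omega) le_rfl, hsum', mixedDiff, sub_right_comm x (p : ℤ)]
  ring

end BlockTerm

section Assembly

variable {p q r : ℕ} (hp : p.Prime) (hq : q.Prime) (hr : r.Prime) (hpq : p ≠ q)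
  (hrpq : ¬ r ∣ p * q) {k : ℤ} (hk : 0 < k)
include hp hq hr hpq hrpq hk

theorem coeffInt_cyclotomic_eq_sum_blockTerm {ε : ℤ} (hε : ε * ε = 1)
    (hrk : (r : ℤ) = k * (p * q) + ε) (n : ℤ) :
    coeffInt (cyclotomic (p * q * r) ℤ) n = ∑ t ∈ range p,
      (blockTerm p q (fun s => ε * s / k) (ε * (n - t)) -
        blockTerm p q (fun s => ε * s / k) (ε * (n - q - t))) := by
  have hw : (0 : ℤ) < p * q := by have := hp.pos; have := hq.pos; positivity
  have hdeg : ((cyclotomic (p * q) ℤ).natDegree : ℤ) < p * q := by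
    rw [natDegree_cyclotomic]
    exact_mod_cast Nat.totient_lt _ (Nat.one_lt_mul_iff.2 ⟨hp.pos, hq.pos, Or.inl hp.one_lt⟩)
  have hεr : ε * r ≡ 1 [ZMOD p * q] :=
    Int.modEq_iff_dvd.2 ⟨-(ε * k), by rw [hrk]; linear_combination (-1 : ℤ) * hε⟩
  rw [coeffInt_cyclotomic_mul_mul hp hq hr hpq hrpq _ (fun u => residueTerm_of_neg hw)
    (residueTerm_sub_residueTerm_sub (mod_cast hw) (mod_cast hdeg) hr.pos (mod_cast hεr))]
  simp only [residueTerm_eq_blockTerm hp hq hpq hk hε hrk]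

theorem abs_coeffInt_cyclotomic_le_one_of_eq_add_one (hrk : (r : ℤ) = k * (p * q) + 1) {n : ℤ}
    (hn : n ≤ ((p : ℤ) - 1) * (q - 1) * (r - 1)) :
    |coeffInt (cyclotomic (p * q * r) ℤ) n| ≤ 1 := by
  have hw : (0 : ℤ) < p * q := by have := hp.pos; have := hq.pos; positivity
  have hx₀ : 0 ≤ n % (p * q) := Int.emod_nonneg _ hw.ne'
  have hxw : n % (p * q) < p * q := Int.emod_lt_of_pos _ hw
  have hs : n / (p * q) ≤ (p - 1) * (q - 1) * k := by
    refine le_of_mul_le_mul_left ?_ hw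
    calc (p * q : ℤ) * (n / (p * q)) ≤ n := Int.mul_ediv_self_le hw.ne'
      _ ≤ (p * q) * ((p - 1) * (q - 1) * k) := by rw [hrk] at hn; linarith
  have hφ : 1 * (n / (p * q) - 1) / k ≤ n % (p * q) + p * q - p - q := by
    have := Int.ediv_lt_of_lt_mul hk
      (show 1 * (n / (p * q) - 1) < (p - 1) * (q - 1) * k by linarith)
    linarith
  rw [coeffInt_cyclotomic_eq_sum_blockTerm hp hq hr hpq hrpq hk (one_mul 1) hrk]
  simp only [one_mul]
  rw [← Int.mul_ediv_add_emod n (p * q)]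
  rw [sum_blockTerm_sub hp.pos hq.pos _ _ hx₀ hxw (by simpa using hφ)]
  exact abs_mixedDiff_cutoff_le_one ((Nat.coprime_primes hp hq).2 hpq) _ hxw

/-- Reversing the window turns the sum at `n` into minus the sum at `z = p + q - 1 - n`. -/
theorem abs_coeffInt_cyclotomic_le_one_of_eq_sub_one (hrk : (r : ℤ) = k * (p * q) - 1) {n : ℤ}
    (hn : n ≤ ((p : ℤ) - 1) * (q - 1) * (r - 1)) :
    |coeffInt (cyclotomic (p * q * r) ℤ) n| ≤ 1 := by
  have hw : (0 : ℤ) < p * q := by have := hp.pos; have := hq.pos; positivity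
  set z := p + q - 1 - n with hz
  set s := z / (p * q)
  set x := z % (p * q)
  have hx₀ : 0 ≤ x := Int.emod_nonneg _ hw.ne'
  have hxw : x < p * q := Int.emod_lt_of_pos _ hw
  have hzsx : p * q * s + x = z := Int.mul_ediv_add_emod z (p * q)
  have hφ : -1 * (s - 1) / k ≤ x + p * q - p - q := by
    suffices 1 - s < (x + (p - 1) * (q - 1)) * k by
      have := Int.ediv_lt_of_lt_mul hk (show -1 * (s - 1) < (x + (p - 1) * (q - 1)) * k by linarith)
      linarith
    by_contra! hle
    have h₁ : (p * q : ℤ) * ((x + (p - 1) * (q - 1)) * k) ≤ p * q * (1 - s) :=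
      mul_le_mul_of_nonneg_left hle hw.le
    have h₂ : 0 ≤ x * (p * q * k - 1) := mul_nonneg hx₀ (by nlinarith)
    have h₃ : (0 : ℤ) < (p - 1) * (q - 1) :=
      mul_pos (by linarith [hp.two_le]) (by linarith [hq.two_le])
    rw [hrk] at hn
    nlinarith
  rw [coeffInt_cyclotomic_eq_sum_blockTerm hp hq hr hpq hrpq hk (ε := -1) (by norm_num)
    (by rw [hrk]; ring)]
  have hwin := sum_blockTerm_sub hp.pos hq.pos (fun s => -1 * s / k) s hx₀ hxw hφ
  calc _ = |mixedDiff p q (cutoff p q (-1 * s / k)) x| := by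
        rw [← hwin, ← abs_neg, ← sum_neg_distrib, ← sum_range_reflect]
        refine congrArg _ (sum_congr rfl fun t ht => ?_)
        have ht : (((p - 1 - t : ℕ)) : ℤ) = p - 1 - t := by
          have := mem_range.1 ht; push_cast [Nat.sub_sub, Nat.cast_sub (by omega : 1 + t ≤ p)]; ring
        rw [ht, hzsx, hz]
        ring_nf
    _ ≤ 1 := abs_mixedDiff_cutoff_le_one ((Nat.coprime_primes hp hq).2 hpq) _ hxw

end Assembly

theorem cycHeight_eq_one {f : ℤ[X]} (hf : f.Monic) (h : ∀ n ≤ f.natDegree, |f.coeff n| ≤ 1) :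
    cycHeight f = 1 := by
  unfold cycHeight
  refine le_antisymm (Finset.sup_le fun n hn => ?_) ?_
  · have := h n (le_natDegree_of_mem_supp n hn)
    rw [Int.abs_eq_natAbs] at this
    exact_mod_cast this
  · have hmem : f.natDegree ∈ f.support := by simp [hf.coeff_natDegree]
    simpa [hf.coeff_natDegree] using Finset.le_sup (f := fun m => (f.coeff m).natAbs) hmem

theorem exists_pos_eq_mul_add_of_dvd_sub {w r ε : ℤ} (hw : 0 < w) (hr : ε < r) (h : w ∣ r - ε) :
    ∃ k, 0 < k ∧ r = k * w + ε := by
  obtain ⟨k, hk⟩ := h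
  exact ⟨k, pos_of_mul_pos_right (by linarith) hw.le, by linarith⟩

theorem natDegree_cyclotomic_mul_mul {p q r : ℕ} (hp : p.Prime) (hq : q.Prime) (hr : r.Prime)
    (hpq : p ≠ q) (hrpq : ¬ r ∣ p * q) :
    (cyclotomic (p * q * r) ℤ).natDegree = (p - 1) * (q - 1) * (r - 1) := by
  rw [natDegree_cyclotomic, Nat.totient_mul ((Nat.Prime.coprime_iff_not_dvd hr).2 hrpq).symm,
    Nat.totient_mul ((Nat.coprime_primes hp hq).2 hpq), Nat.totient_prime hp,
    Nat.totient_prime hq, Nat.totient_prime hr]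

theorem stmt10_general (p q r : ℕ) (hp : p.Prime) (hq : q.Prime) (hr : r.Prime)
    (hpq : p ≠ q) (hrp : r ≠ p) (hrq : r ≠ q)
    (hcong : r ≡ 1 [MOD p * q] ∨ (r : ℤ) ≡ -1 [ZMOD (p * q : ℕ)]) :
    cycHeight (Polynomial.cyclotomic (p * q * r) ℤ) = 1 := by
  have hrpq : ¬ r ∣ p * q := fun h => (hr.dvd_mul.1 h).elim
    (fun h => hrp ((Nat.prime_dvd_prime_iff_eq hr hp).1 h))
    (fun h => hrq ((Nat.prime_dvd_prime_iff_eq hr hq).1 h))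
  have hw : (0 : ℤ) < p * q := by have := hp.pos; have := hq.pos; positivity
  have hr₂ : (2 : ℤ) ≤ r := by exact_mod_cast hr.two_le
  refine cycHeight_eq_one (cyclotomic.monic _ ℤ) fun n hn => ?_
  have hn' : (n : ℤ) ≤ ((p : ℤ) - 1) * (q - 1) * (r - 1) := by
    rw [natDegree_cyclotomic_mul_mul hp hq hr hpq hrpq] at hn
    zify [hp.one_le, hq.one_le, hr.one_le] at hn
    exact hn
  rw [← coeffInt_natCast]
  rcases hcong with h | h
  · obtain ⟨k, hk, hrk⟩ := exists_pos_eq_mul_add_of_dvd_sub (r := r) (ε := 1) hw (by linarith)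
      (by simpa using (Int.natCast_modEq_iff.2 h).symm.dvd)
    exact abs_coeffInt_cyclotomic_le_one_of_eq_add_one hp hq hr hpq hrpq hk hrk hn'
  · obtain ⟨k, hk, hrk⟩ := exists_pos_eq_mul_add_of_dvd_sub (r := r) (ε := -1) hw (by linarith)
      (by simpa using h.symm.dvd)
    exact abs_coeffInt_cyclotomic_le_one_of_eq_sub_one hp hq hr hpq hrpq hk (by linarith) hn'

theorem stmt10 (p q r : ℕ) (hp : p.Prime) (hq : q.Prime) (hr : r.Prime)
    (hpo : Odd p) (hqo : Odd q) (hpq : p ≠ q) (hrp : r ≠ p) (hrq : r ≠ q)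
    (hcong : r ≡ 1 [MOD p * q] ∨ (r : ℤ) ≡ -1 [ZMOD (p * q : ℕ)]) :
    cycHeight (Polynomial.cyclotomic (p * q * r) ℤ) = 1 :=
  stmt10_general p q r hp hq hr hpq hrp hrq hcong
end
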